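/- For H_a as in the extended isotropic oscillator family, the function K_{a2} = p_x^2 + (k_1 x^2/2 + k_2/x^2)(p_z^2 + 2Z(z)) + t_1 x^2 + 2 t_2/x^2 Poisson-commutes with H_a = (1/2)(p_x^2 + p_y^2 + V_a p_z^2) + U_a + V_a Z(z), on the set x ≠ 0, y ≠ 0; moreover H_a = (1/2)(K_{a2} + K_{a3}) where K_{a3} = p_y^2 + (k_1 y^2/2 + k_3/y^2)(p_z^2 + 2Z(z)) + t_1 y^2 + 2 t_3/y^2. -/

import Mathlib

/-- Canonical Poisson bracket on phase space ℝ³ × ℝ³ with coordinates (x,y,z,pₓ,p_y,p_z). -/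
noncomputable def pb (F G : ℝ → ℝ → ℝ → ℝ → ℝ → ℝ → ℝ) (x y z px py pz : ℝ) : ℝ :=
    deriv (fun t => F t y z px py pz) x * deriv (fun t => G x y z t py pz) px
  + deriv (fun t => F x t z px py pz) y * deriv (fun t => G x y z px t pz) py
  + deriv (fun t => F x y t px py pz) z * deriv (fun t => G x y z px py t) pz
  - deriv (fun t => F x y z t py pz) px * deriv (fun t => G t y z px py pz) x
  - deriv (fun t => F x y z px t pz) py * deriv (fun t => G x t z px py pz) y
  - deriv (fun t => F x y z px py t) pz * deriv (fun t => G x y t px py pz) z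

noncomputable def Ha (k1 k2 k3 t1 t2 t3 : ℝ) (Z : ℝ → ℝ) :
    ℝ → ℝ → ℝ → ℝ → ℝ → ℝ → ℝ :=
  fun x y z px py pz =>
    (1/2) * (px^2 + py^2 + ((1/2)*k1*(x^2+y^2) + k2/x^2 + k3/y^2) * pz^2)
    + ((1/2)*t1*(x^2+y^2) + t2/x^2 + t3/y^2)
    + ((1/2)*k1*(x^2+y^2) + k2/x^2 + k3/y^2) * Z z

noncomputable def Ka2 (k1 k2 t1 t2 : ℝ) (Z : ℝ → ℝ) :
    ℝ → ℝ → ℝ → ℝ → ℝ → ℝ → ℝ :=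
  fun x _ z px _ pz =>
    px^2 + (k1*x^2/2 + k2/x^2) * (pz^2 + 2*Z z) + t1*x^2 + 2*t2/x^2

noncomputable def Ka3 (k1 k3 t1 t3 : ℝ) (Z : ℝ → ℝ) :
    ℝ → ℝ → ℝ → ℝ → ℝ → ℝ → ℝ :=
  fun _ y z _ py pz =>
    py^2 + (k1*y^2/2 + k3/y^2) * (pz^2 + 2*Z z) + t1*y^2 + 2*t3/y^2

/-!
`K_{a2}` depends only on `(x, p_x)` and, through the common factor `Φ = p_z² + 2 Z(z)`, on
`(z, p_z)`; `K_{a3}` has the same shape in `(y, p_y)` with the same `Φ`. Hence in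
`{½ K_{a2} + ½ K_{a3}, K_{a2}}` the `(x, p_x)` terms cancel as in `{K_{a2}, K_{a2}} = 0`, the
`(y, p_y)` terms vanish, and the `(z, p_z)` terms are a multiple of `{Φ, Φ} = 0`.
-/

section Separated

variable (A B : ℝ → ℝ → ℝ) (f g : ℝ → ℝ) (Φ : ℝ → ℝ → ℝ)

def xSeparated : ℝ → ℝ → ℝ → ℝ → ℝ → ℝ → ℝ :=
  fun x _ z px _ pz => B x px + g x * Φ z pz

def ySeparated : ℝ → ℝ → ℝ → ℝ → ℝ → ℝ → ℝ :=
  fun _ y z _ py pz => A y py + f y * Φ z pz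

theorem pb_linearCombination_xSeparated_eq_zero (a b x y z px py pz : ℝ) :
    pb (fun x y z px py pz => a * xSeparated B g Φ x y z px py pz
        + b * ySeparated A f Φ x y z px py pz) (xSeparated B g Φ) x y z px py pz = 0 := by
  have hx : deriv (fun t => a * xSeparated B g Φ t y z px py pz
      + b * ySeparated A f Φ t y z px py pz) x
      = a * deriv (fun t => xSeparated B g Φ t y z px py pz) x := by
    simp only [ySeparated, deriv_add_const', deriv_const_mul_field']
  have hpx : deriv (fun t => a * xSeparated B g Φ x y z t py pz
      + b * ySeparated A f Φ x y z t py pz) px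
      = a * deriv (fun t => xSeparated B g Φ x y z t py pz) px := by
    simp only [ySeparated, deriv_add_const', deriv_const_mul_field']
  have hy : deriv (fun t => xSeparated B g Φ x t z px py pz) y = 0 := by
    simp only [xSeparated, deriv_const']
  have hpy : deriv (fun t => xSeparated B g Φ x y z px t pz) py = 0 := by
    simp only [xSeparated, deriv_const']
  have hz : deriv (fun t => a * xSeparated B g Φ x y t px py pz
      + b * ySeparated A f Φ x y t px py pz) z
      = (a * g x + b * f y) * deriv (fun t => Φ t pz) z := by
    have hslice : (fun t => a * xSeparated B g Φ x y t px py pz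
        + b * ySeparated A f Φ x y t px py pz)
        = fun t => (a * B x px + b * A y py) + (a * g x + b * f y) * Φ t pz := by
      funext t
      simp only [xSeparated, ySeparated]
      ring
    rw [hslice, deriv_const_add', deriv_const_mul_field']
  have hpz : deriv (fun t => a * xSeparated B g Φ x y z px py t
      + b * ySeparated A f Φ x y z px py t) pz
      = (a * g x + b * f y) * deriv (fun t => Φ z t) pz := by
    have hslice : (fun t => a * xSeparated B g Φ x y z px py t
        + b * ySeparated A f Φ x y z px py t)
        = fun t => (a * B x px + b * A y py) + (a * g x + b * f y) * Φ z t := by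
      funext t
      simp only [xSeparated, ySeparated]
      ring
    rw [hslice, deriv_const_add', deriv_const_mul_field']
  have hGz : deriv (fun t => xSeparated B g Φ x y t px py pz) z
      = g x * deriv (fun t => Φ t pz) z := by
    simp only [xSeparated, deriv_const_add', deriv_const_mul_field']
  have hGpz : deriv (fun t => xSeparated B g Φ x y z px py t) pz
      = g x * deriv (fun t => Φ z t) pz := by
    simp only [xSeparated, deriv_const_add', deriv_const_mul_field']
  rw [pb, hx, hpx, hy, hpy, hz, hpz, hGz, hGpz]
  ring

end Separated

theorem Ka2_eq_xSeparated (k1 k2 t1 t2 : ℝ) (Z : ℝ → ℝ) :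
    Ka2 k1 k2 t1 t2 Z = xSeparated (fun x px => px^2 + t1*x^2 + 2*t2/x^2)
      (fun x => k1*x^2/2 + k2/x^2) (fun z pz => pz^2 + 2*Z z) := by
  funext x y z px py pz
  simp only [Ka2, xSeparated]
  ring

theorem Ka3_eq_ySeparated (k1 k3 t1 t3 : ℝ) (Z : ℝ → ℝ) :
    Ka3 k1 k3 t1 t3 Z = ySeparated (fun y py => py^2 + t1*y^2 + 2*t3/y^2)
      (fun y => k1*y^2/2 + k3/y^2) (fun z pz => pz^2 + 2*Z z) := by
  funext x y z px py pz
  simp only [Ka3, ySeparated]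
  ring

theorem Ha_eq_half_Ka2_add_half_Ka3 (k1 k2 k3 t1 t2 t3 : ℝ) (Z : ℝ → ℝ) :
    Ha k1 k2 k3 t1 t2 t3 Z = fun x y z px py pz =>
      1/2 * Ka2 k1 k2 t1 t2 Z x y z px py pz + 1/2 * Ka3 k1 k3 t1 t3 Z x y z px py pz := by
  funext x y z px py pz
  simp only [Ha, Ka2, Ka3]
  ring

theorem stmt_16_general (k1 k2 k3 t1 t2 t3 : ℝ) (Z : ℝ → ℝ)
    (x y z px py pz : ℝ) :
    pb (Ha k1 k2 k3 t1 t2 t3 Z) (Ka2 k1 k2 t1 t2 Z) x y z px py pz = 0 ∧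
    Ha k1 k2 k3 t1 t2 t3 Z x y z px py pz =
      (1/2) * (Ka2 k1 k2 t1 t2 Z x y z px py pz
             + Ka3 k1 k3 t1 t3 Z x y z px py pz) := by
  rw [Ha_eq_half_Ka2_add_half_Ka3, mul_add]
  refine ⟨?_, rfl⟩
  rw [Ka2_eq_xSeparated, Ka3_eq_ySeparated]
  exact pb_linearCombination_xSeparated_eq_zero _ _ _ _ _ _ _ _ _ _ _ _ _

theorem stmt_16 (k1 k2 k3 t1 t2 t3 : ℝ) (Z : ℝ → ℝ) (hZ : Differentiable ℝ Z)
    (x y z px py pz : ℝ) (hx : x ≠ 0) (hy : y ≠ 0) :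
    pb (Ha k1 k2 k3 t1 t2 t3 Z) (Ka2 k1 k2 t1 t2 Z) x y z px py pz = 0 ∧
    Ha k1 k2 k3 t1 t2 t3 Z x y z px py pz =
      (1/2) * (Ka2 k1 k2 t1 t2 Z x y z px py pz
             + Ka3 k1 k3 t1 t3 Z x y z px py pz) :=
  stmt_16_general k1 k2 k3 t1 t2 t3 Z x y z px py pz
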